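/- arXiv:1306.0764 — 3 statements merged into one kernel-verified Lean document; each statement's English description precedes it below -/
import Mathlib

section
/- Let $N\ge 1$ and let $F$ be a positive Borel measure on $\mathbb{R}^N$ with $\int dF=1$, $\int v\,dF=0$, $\int|v|^2\,dF=N$, and let $M(v)=(2\pi)^{-N/2}e^{-|v|^2/2}$. Then $\|F-M\|_2\le 2(N+1)\,\|F-M\|_0\,\log\!\left(\frac{4}{\|F-M\|_0}\right)$, with the convention $x\log(1/x)=0$ at $x=0$, where $\|\mu\|_s=\int_{\mathbb{R}^N}\langle v\rangle^s\,d|\mu|(v)$ and $\langle v\rangle=\sqrt{1+|v|^2}$. -/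
open MeasureTheory Real ENNReal


-- measure algebra lemma
theorem hahn_sub_add {α : Type*} [MeasurableSpace α] (μ ν : Measure α)
    [IsFiniteMeasure μ] [IsFiniteMeasure ν] : (μ - ν) + ν = (ν - μ) + μ := by
  obtain ⟨s, hs, h1, h2⟩ := hahn_decomposition (μ := μ) (ν := ν)
  -- h1 : ∀ t, MeasurableSet t → t ⊆ s → ν t ≤ μ t ; h2 : on sᶜ, μ t ≤ ν t
  have hr1 : ν.restrict s ≤ μ.restrict s := by
    rw [Measure.le_iff]
    intro t ht
    rw [Measure.restrict_apply ht, Measure.restrict_apply ht]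
    exact h1 _ (ht.inter hs) Set.inter_subset_right
  have hr2 : μ.restrict sᶜ ≤ ν.restrict sᶜ := by
    rw [Measure.le_iff]
    intro t ht
    rw [Measure.restrict_apply ht, Measure.restrict_apply ht]
    exact h2 _ (ht.inter hs.compl) Set.inter_subset_right
  have e1 : μ - ν = μ.restrict s - ν.restrict s := by
    conv_lhs => rw [← Measure.restrict_add_restrict_compl (μ := μ - ν) hs]
    rw [Measure.restrict_sub_eq_restrict_sub_restrict hs,
      Measure.restrict_sub_eq_restrict_sub_restrict hs.compl,
      Measure.sub_eq_zero_of_le hr2, add_zero]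
  have e2 : ν - μ = ν.restrict sᶜ - μ.restrict sᶜ := by
    conv_lhs => rw [← Measure.restrict_add_restrict_compl (μ := ν - μ) hs]
    rw [Measure.restrict_sub_eq_restrict_sub_restrict hs,
      Measure.restrict_sub_eq_restrict_sub_restrict hs.compl,
      Measure.sub_eq_zero_of_le hr1, zero_add]
  rw [e1, e2]
  calc μ.restrict s - ν.restrict s + ν
      = μ.restrict s - ν.restrict s + ν.restrict s + ν.restrict sᶜ := by
        rw [add_assoc, Measure.restrict_add_restrict_compl hs]
    _ = μ.restrict s + ν.restrict sᶜ := by rw [Measure.sub_add_cancel_of_le hr1]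
    _ = ν.restrict sᶜ - μ.restrict sᶜ + μ.restrict sᶜ + μ.restrict s := by
        rw [Measure.sub_add_cancel_of_le hr2]; exact add_comm _ _
    _ = ν.restrict sᶜ - μ.restrict sᶜ + μ := by
        rw [add_assoc, add_comm (μ.restrict sᶜ), Measure.restrict_add_restrict_compl hs]

theorem gauss1d : ∫ x : ℝ, rexp (-x ^ 2 / 2) = Real.sqrt (2 * π) := by
  have h := integral_gaussian (1/2 : ℝ)
  have e : ∀ x : ℝ, -(1/2 : ℝ) * x ^ 2 = -x ^ 2 / 2 := fun x => by ring
  simp only [e] at h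
  rw [h]; congr 1; rw [div_div_eq_mul_div, div_one]; ring

theorem gauss1d_sq : ∫ x : ℝ, x ^ 2 * rexp (-x ^ 2 / 2) = Real.sqrt (2 * π) := by
  have habs : ∫ x : ℝ, x ^ 2 * rexp (-x ^ 2 / 2)
      = ∫ x : ℝ, (fun y => y ^ 2 * rexp (-y ^ 2 / 2)) |x| := by
    congr 1; funext x; simp [sq_abs]
  have h2 := integral_comp_abs (f := fun y : ℝ => y ^ 2 * rexp (-y ^ 2 / 2))
  rw [habs, h2]
  have hIoi : ∫ x in Set.Ioi (0:ℝ), x ^ 2 * rexp (-x ^ 2 / 2)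
      = ∫ x in Set.Ioi (0:ℝ), x ^ (2:ℝ) * rexp (-(1/2) * x ^ (2:ℝ)) := by
    refine setIntegral_congr_fun measurableSet_Ioi (fun x hx => ?_)
    rw [Real.rpow_two]; ring_nf
  rw [hIoi, integral_rpow_mul_exp_neg_mul_rpow two_pos (by norm_num) (by norm_num : (0:ℝ) < 1/2)]
  have hG : Real.Gamma ((2 + 1) / 2) = Real.sqrt π / 2 := by
    have : ((2:ℝ) + 1) / 2 = 1/2 + 1 := by norm_num
    rw [this, Real.Gamma_add_one (by norm_num), Real.Gamma_one_half_eq]; ring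
  rw [hG]
  have hb : ((1:ℝ)/2) ^ (-(2 + 1) / 2 : ℝ) = 2 * Real.sqrt 2 := by
    have e1 : ((1:ℝ)/2) ^ (-(2 + 1) / 2 : ℝ) = (2:ℝ) ^ ((2 + 1) / 2 : ℝ) := by
      rw [one_div, ← Real.rpow_neg_one (2:ℝ), ← Real.rpow_mul (by norm_num)]
      norm_num
    rw [e1, show ((2 + 1) / 2 : ℝ) = 1 + 1/2 by norm_num, Real.rpow_add two_pos,
      Real.rpow_one, ← Real.sqrt_eq_rpow]
  rw [hb, Real.sqrt_mul (by norm_num : (0:ℝ) ≤ 2)]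
  rw [show Real.sqrt 2 * Real.sqrt π = Real.sqrt 2 * Real.sqrt π from rfl]
  ring

lemma rpow_half_nat (y : ℝ) (hy : 0 ≤ y) (N : ℕ) : y ^ ((N:ℝ)/2) = Real.sqrt y ^ N := by
  rw [Real.sqrt_eq_rpow, ← Real.rpow_natCast (y ^ ((1:ℝ)/2)) N, ← Real.rpow_mul hy]
  congr 1; ring

lemma gaussE_val (N : ℕ) {b : ℝ} (hb : 0 < b) :
    ∫ v : EuclideanSpace ℝ (Fin N), rexp (-b * ‖v‖ ^ 2) = Real.sqrt (π / b) ^ N := by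
  rw [GaussianFourier.integral_rexp_neg_mul_sq_norm hb, finrank_euclideanSpace_fin,
    rpow_half_nat _ (by positivity)]

lemma norm_symm_sq (N : ℕ) (x : Fin N → ℝ) :
    ‖(MeasurableEquiv.toLp 2 (Fin N → ℝ)).symm.symm x‖ ^ 2 = ∑ i, x i ^ 2 := by
  simp only [MeasurableEquiv.symm_symm, MeasurableEquiv.toLp_apply,
    EuclideanSpace.norm_eq, PiLp.toLp_apply, Real.norm_eq_abs, sq_abs]
  rw [Real.sq_sqrt]
  exact Finset.sum_nonneg fun i _ => sq_nonneg _

lemma gaussE_integrable (N : ℕ) {b : ℝ} (hb : 0 < b) :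
    Integrable (fun v : EuclideanSpace ℝ (Fin N) => rexp (-b * ‖v‖ ^ 2)) := by
  have hmp := EuclideanSpace.volume_preserving_symm_measurableEquiv_toLp (Fin N)
  rw [← MeasurePreserving.integrable_comp_emb hmp.symm
    (MeasurableEquiv.measurableEmbedding _)]
  have : ((fun v : EuclideanSpace ℝ (Fin N) => rexp (-b * ‖v‖ ^ 2)) ∘
      (MeasurableEquiv.toLp 2 (Fin N → ℝ)).symm.symm)
      = fun x : Fin N → ℝ => ∏ i, rexp (-b * x i ^ 2) := by
    funext x
    simp only [Function.comp_apply, norm_symm_sq, Finset.mul_sum, ← Real.exp_sum]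
  rw [this]
  exact Integrable.fintype_prod fun i => integrable_exp_neg_mul_sq hb

lemma gaussE_sq_integrable (N : ℕ) :
    Integrable (fun v : EuclideanSpace ℝ (Fin N) => ‖v‖ ^ 2 * rexp (-‖v‖ ^ 2 / 2)) := by
  refine Integrable.mono' ((gaussE_integrable N (by norm_num : (0:ℝ) < 1/4)).const_mul 4)
    ?_ (Filter.Eventually.of_forall fun v => ?_)
  · exact (Continuous.aestronglyMeasurable (by continuity))
  · have h1 : 0 ≤ ‖v‖ ^ 2 := sq_nonneg _
    rw [Real.norm_eq_abs, abs_of_nonneg (by positivity)]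
    have h2 : ‖v‖ ^ 2 / 4 ≤ rexp (‖v‖ ^ 2 / 4) := by
      linarith [Real.add_one_le_exp (‖v‖ ^ 2 / 4)]
    have h3 : ‖v‖ ^ 2 * rexp (-‖v‖ ^ 2 / 2) ≤ 4 * rexp (‖v‖ ^ 2 / 4) * rexp (-‖v‖ ^ 2 / 2) := by
      nlinarith [Real.exp_pos (-‖v‖ ^ 2 / 2)]
    calc ‖v‖ ^ 2 * rexp (-‖v‖ ^ 2 / 2) ≤ 4 * rexp (‖v‖ ^ 2 / 4) * rexp (-‖v‖ ^ 2 / 2) := h3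
      _ = 4 * rexp (-(1/4) * ‖v‖ ^ 2) := by rw [mul_assoc, ← Real.exp_add]; ring_nf

lemma int_sq_1d : Integrable (fun t : ℝ => t ^ 2 * rexp (-t ^ 2 / 2)) := by
  have h := integrable_rpow_mul_exp_neg_mul_sq (b := 1/2) (by norm_num) (s := 2) (by norm_num)
  have e : ∀ t : ℝ, t ^ (2:ℝ) * rexp (-(1/2) * t ^ 2) = t ^ 2 * rexp (-t ^ 2 / 2) := by
    intro t; rw [Real.rpow_two]; ring_nf
  simpa only [e] using h

lemma int_exp_1d : Integrable (fun t : ℝ => rexp (-t ^ 2 / 2)) := by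
  have h := integrable_exp_neg_mul_sq (b := 1/2) (by norm_num)
  have e : ∀ t : ℝ, rexp (-(1/2) * t ^ 2) = rexp (-t ^ 2 / 2) := by intro t; ring_nf
  simpa only [e] using h

lemma gaussE_sq_val (N : ℕ) :
    ∫ v : EuclideanSpace ℝ (Fin N), ‖v‖ ^ 2 * rexp (-‖v‖ ^ 2 / 2)
      = N * Real.sqrt (2 * π) ^ N := by
  have hmp := EuclideanSpace.volume_preserving_symm_measurableEquiv_toLp (Fin N)
  rw [← MeasurePreserving.integral_comp hmp.symm (MeasurableEquiv.measurableEmbedding _)]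
  have key : ∀ x : Fin N → ℝ,
      (fun v : EuclideanSpace ℝ (Fin N) => ‖v‖ ^ 2 * rexp (-‖v‖ ^ 2 / 2))
        ((MeasurableEquiv.toLp 2 (Fin N → ℝ)).symm.symm x)
      = ∑ i, ∏ j, (if j = i then (fun t : ℝ => t ^ 2 * rexp (-t ^ 2 / 2))
          else (fun t : ℝ => rexp (-t ^ 2 / 2))) (x j) := by
    intro x
    simp only [norm_symm_sq]
    have hprod : rexp (-(∑ i, x i ^ 2) / 2) = ∏ j, rexp (-x j ^ 2 / 2) := by
      rw [← Real.exp_sum]; congr 1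
      rw [← Finset.sum_div]; rw [← Finset.sum_neg_distrib]
    rw [hprod, Finset.sum_mul]
    refine Finset.sum_congr rfl fun i _ => ?_
    rw [← Finset.mul_prod_erase Finset.univ _ (Finset.mem_univ i),
      ← Finset.mul_prod_erase Finset.univ
        (fun j => (if j = i then (fun t : ℝ => t ^ 2 * rexp (-t ^ 2 / 2))
          else (fun t : ℝ => rexp (-t ^ 2 / 2))) (x j)) (Finset.mem_univ i)]
    rw [if_pos rfl]
    have herase : ∏ j ∈ Finset.univ.erase i,
        (if j = i then (fun t : ℝ => t ^ 2 * rexp (-t ^ 2 / 2))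
          else (fun t : ℝ => rexp (-t ^ 2 / 2))) (x j)
        = ∏ j ∈ Finset.univ.erase i, rexp (-x j ^ 2 / 2) :=
      Finset.prod_congr rfl fun j hj => by rw [if_neg (Finset.ne_of_mem_erase hj)]
    rw [herase]
    ring
  simp only [key]
  rw [integral_finset_sum]
  · have hval : ∀ i : Fin N, (∫ x : Fin N → ℝ, ∏ j,
        (if j = i then (fun t : ℝ => t ^ 2 * rexp (-t ^ 2 / 2))
          else (fun t : ℝ => rexp (-t ^ 2 / 2))) (x j)) = Real.sqrt (2 * π) ^ N := by
      intro i
      rw [MeasureTheory.integral_fintype_prod_volume_eq_prod]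
      have : ∀ j : Fin N, (∫ t : ℝ, (if j = i then (fun t : ℝ => t ^ 2 * rexp (-t ^ 2 / 2))
          else (fun t : ℝ => rexp (-t ^ 2 / 2))) t) = Real.sqrt (2 * π) := by
        intro j
        by_cases h : j = i
        · simp only [if_pos h]; exact gauss1d_sq
        · simp only [if_neg h]; exact gauss1d
      simp only [this, Finset.prod_const, Finset.card_univ, Fintype.card_fin]
    simp only [hval, Finset.sum_const, Finset.card_univ, Fintype.card_fin, nsmul_eq_mul]
  · intro i _
    refine Integrable.fintype_prod fun j => ?_
    by_cases h : j = i
    · simp only [if_pos h]; exact int_sq_1d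
    · simp only [if_neg h]; exact int_exp_1d

lemma keybound (N : ℕ) (hN : 1 ≤ N) :
    rexp (((N:ℝ) + 1)⁻¹ / 2) / Real.sqrt (1 - ((N:ℝ) + 1)⁻¹) ^ N ≤ 2 := by
  have hn : (1:ℝ) ≤ (N:ℝ) := by exact_mod_cast hN
  set n : ℝ := (N:ℝ)
  have hn0 : (0:ℝ) < n := by linarith
  have hδ : (1:ℝ) - (n+1)⁻¹ = n/(n+1) := by field_simp; ring
  have hx : (0:ℝ) < n/(n+1) := by positivity
  have hsq : Real.sqrt (n/(n+1)) ^ N = rexp ((n/2) * Real.log (n/(n+1))) := by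
    rw [Real.sqrt_eq_rpow, Real.rpow_def_of_pos hx, ← Real.exp_nat_mul]
    congr 1; ring
  set y : ℝ := (n+1)/n with hy_def
  have hy1 : 1 ≤ y := by rw [hy_def, le_div_iff₀ hn0]; linarith
  have hy0 : (0:ℝ) < y := by linarith
  set s : ℝ := Real.sqrt y with hs_def
  have hss : s * s = y := Real.mul_self_sqrt (le_of_lt hy0)
  have hs0 : 0 ≤ s := Real.sqrt_nonneg y
  have hs1 : 1 ≤ s := by
    rw [hs_def, show (1:ℝ) = Real.sqrt 1 by simp]
    exact Real.sqrt_le_sqrt hy1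
  have hkey : 3*n+1 ≤ 3*n*s := by
    have h2 : (3*n*s)^2 = 9*n^2*(s*s) := by ring
    have h3 : 9*n^2*y = 9*n^2+9*n := by rw [hy_def]; field_simp
    have h1 : (3*n+1)^2 ≤ (3*n*s)^2 := by rw [h2, hss, h3]; nlinarith
    have h4 : 0 ≤ 3*n*s := by positivity
    nlinarith [h1, h4]
  have hlogy : Real.log y ≤ 2 * (s - 1) := by
    have h1 : Real.log s ≤ s - 1 := Real.log_le_sub_one_of_pos (by linarith)
    have h2 : Real.log y = 2 * Real.log s := by
      rw [hs_def, Real.log_sqrt (le_of_lt hy0)]; ring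
    linarith
  have hsub : n * (s - 1) * (s + 1) = 1 := by
    have hy : n * (y - 1) = 1 := by rw [hy_def]; field_simp; ring
    nlinarith [hss]
  have hsineq : n * (s - 1) ≤ 3*n/(6*n+1) := by
    have hsp : (0:ℝ) < s + 1 := by linarith
    rw [le_div_iff₀ (by positivity : (0:ℝ) < 6*n+1)]
    nlinarith [hsub, hkey, hs1]
  have hexp : (n+1)⁻¹/2 + (n/2) * Real.log y ≤ Real.log 2 := by
    have hlog2 : (0.6931471803:ℝ) < Real.log 2 := Real.log_two_gt_d9
    have h5 : (n/2) * Real.log y ≤ n*(s-1) := by nlinarith [hlogy, hn0]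
    have h6 : (n+1)⁻¹/2 + 3*n/(6*n+1) ≤ (0.6931471803:ℝ) := by
      have e1 : (n+1)⁻¹/2 = 1/(2*(n+1)) := by field_simp
      rw [e1, div_add_div _ _ (by positivity : (2*(n+1):ℝ) ≠ 0)
        (by positivity : (6*n+1:ℝ) ≠ 0), div_le_iff₀ (by positivity)]
      ring_nf
      nlinarith [sq_nonneg (n-1), hn]
    linarith
  have hloginv : Real.log (n/(n+1)) = - Real.log y := by
    rw [hy_def, ← Real.log_inv, inv_div]
  rw [hδ, hsq, hloginv, ← Real.exp_sub]
  have e2 : (n+1)⁻¹/2 - n/2 * (- Real.log y) = (n+1)⁻¹/2 + (n/2) * Real.log y := by ring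
  rw [e2]
  calc rexp ((n+1)⁻¹/2 + (n/2) * Real.log y) ≤ rexp (Real.log 2) :=
        Real.exp_le_exp.mpr hexp
    _ = 2 := Real.exp_log two_pos

lemma cnorm (N : ℕ) : (2*π) ^ (-(N:ℝ)/2) * Real.sqrt (2*π) ^ N = 1 := by
  rw [← rpow_half_nat _ (by positivity), ← Real.rpow_add (by positivity)]
  rw [show (-(N:ℝ)/2 + (N:ℝ)/2) = 0 by ring, Real.rpow_zero]

lemma dens_int (N : ℕ) :
    Integrable (fun v : EuclideanSpace ℝ (Fin N) =>
      (2*π) ^ (-(N:ℝ)/2) * rexp (-‖v‖ ^ 2 / 2)) := by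
  have h := (gaussE_integrable N (by norm_num : (0:ℝ) < 1/2)).const_mul ((2*π) ^ (-(N:ℝ)/2))
  have e : ∀ v : EuclideanSpace ℝ (Fin N),
      (2*π) ^ (-(N:ℝ)/2) * rexp (-(1/2) * ‖v‖ ^ 2)
        = (2*π) ^ (-(N:ℝ)/2) * rexp (-‖v‖ ^ 2 / 2) := by
    intro v; ring_nf
  simpa only [e] using h

lemma dens_val (N : ℕ) :
    ∫ v : EuclideanSpace ℝ (Fin N), (2*π) ^ (-(N:ℝ)/2) * rexp (-‖v‖ ^ 2 / 2) = 1 := by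
  rw [integral_const_mul]
  have e : ∀ v : EuclideanSpace ℝ (Fin N), rexp (-‖v‖ ^ 2 / 2) = rexp (-(1/2) * ‖v‖ ^ 2) := by
    intro v; ring_nf
  simp only [e]
  rw [gaussE_val N (by norm_num : (0:ℝ) < 1/2)]
  rw [show π / (1/2 : ℝ) = 2 * π by ring]
  exact cnorm N

lemma wdens_int (N : ℕ) :
    Integrable (fun v : EuclideanSpace ℝ (Fin N) =>
      (1 + ‖v‖ ^ 2) * ((2*π) ^ (-(N:ℝ)/2) * rexp (-‖v‖ ^ 2 / 2))) := by
  have h := ((dens_int N).add ((gaussE_sq_integrable N).const_mul ((2*π) ^ (-(N:ℝ)/2))))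
  have e : ∀ v : EuclideanSpace ℝ (Fin N),
      (2*π) ^ (-(N:ℝ)/2) * rexp (-‖v‖ ^ 2 / 2)
        + (2*π) ^ (-(N:ℝ)/2) * (‖v‖ ^ 2 * rexp (-‖v‖ ^ 2 / 2))
      = (1 + ‖v‖ ^ 2) * ((2*π) ^ (-(N:ℝ)/2) * rexp (-‖v‖ ^ 2 / 2)) := by intro v; ring
  exact h.congr (Filter.Eventually.of_forall e)

lemma wdens_val (N : ℕ) :
    ∫ v : EuclideanSpace ℝ (Fin N),
      (1 + ‖v‖ ^ 2) * ((2*π) ^ (-(N:ℝ)/2) * rexp (-‖v‖ ^ 2 / 2)) = (N:ℝ) + 1 := by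
  have e : ∀ v : EuclideanSpace ℝ (Fin N),
      (1 + ‖v‖ ^ 2) * ((2*π) ^ (-(N:ℝ)/2) * rexp (-‖v‖ ^ 2 / 2))
      = (2*π) ^ (-(N:ℝ)/2) * rexp (-‖v‖ ^ 2 / 2)
        + (2*π) ^ (-(N:ℝ)/2) * (‖v‖ ^ 2 * rexp (-‖v‖ ^ 2 / 2)) := by intro v; ring
  simp only [e]
  rw [MeasureTheory.integral_add (dens_int N)
    ((gaussE_sq_integrable N).const_mul _), dens_val N, integral_const_mul,
    gaussE_sq_val N]
  have : (2*π) ^ (-(N:ℝ)/2) * ((N:ℝ) * Real.sqrt (2*π) ^ N)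
      = (N:ℝ) * ((2*π) ^ (-(N:ℝ)/2) * Real.sqrt (2*π) ^ N) := by ring
  rw [this, cnorm N]
  ring

lemma gdens_eq (N : ℕ) (v : EuclideanSpace ℝ (Fin N)) :
    rexp (((N:ℝ)+1)⁻¹ * (1 + ‖v‖ ^ 2) / 2) * ((2*π) ^ (-(N:ℝ)/2) * rexp (-‖v‖ ^ 2 / 2))
      = ((2*π) ^ (-(N:ℝ)/2) * rexp (((N:ℝ)+1)⁻¹/2))
        * rexp (-((1 - ((N:ℝ)+1)⁻¹)/2) * ‖v‖ ^ 2) := by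
  rw [show ((2*π) ^ (-(N:ℝ)/2) * rexp (((N:ℝ)+1)⁻¹/2))
        * rexp (-((1 - ((N:ℝ)+1)⁻¹)/2) * ‖v‖ ^ 2)
      = (2*π) ^ (-(N:ℝ)/2) * (rexp (((N:ℝ)+1)⁻¹/2) * rexp (-((1 - ((N:ℝ)+1)⁻¹)/2) * ‖v‖ ^ 2))
      by ring, ← Real.exp_add]
  rw [show rexp (((N:ℝ)+1)⁻¹ * (1 + ‖v‖ ^ 2) / 2) * ((2*π) ^ (-(N:ℝ)/2) * rexp (-‖v‖ ^ 2 / 2))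
      = (2*π) ^ (-(N:ℝ)/2) * (rexp (((N:ℝ)+1)⁻¹ * (1 + ‖v‖ ^ 2) / 2) * rexp (-‖v‖ ^ 2 / 2))
      by ring, ← Real.exp_add]
  congr 1
  ring

lemma hdelta_pos (N : ℕ) (hN : 1 ≤ N) : (0:ℝ) < (1 - ((N:ℝ)+1)⁻¹)/2 := by
  have h1 : (1:ℝ) ≤ (N:ℝ) := by exact_mod_cast hN
  have h2 : ((N:ℝ)+1)⁻¹ ≤ 1/2 := by
    rw [inv_le_comm₀ (by linarith) (by norm_num)]
    norm_num; linarith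
  linarith

lemma gdens_int (N : ℕ) (hN : 1 ≤ N) :
    Integrable (fun v : EuclideanSpace ℝ (Fin N) =>
      rexp (((N:ℝ)+1)⁻¹ * (1 + ‖v‖ ^ 2) / 2)
        * ((2*π) ^ (-(N:ℝ)/2) * rexp (-‖v‖ ^ 2 / 2))) := by
  have h := (gaussE_integrable N (hdelta_pos N hN)).const_mul
    ((2*π) ^ (-(N:ℝ)/2) * rexp (((N:ℝ)+1)⁻¹/2))
  exact h.congr (Filter.Eventually.of_forall fun v => (gdens_eq N v).symm)

lemma gdens_val (N : ℕ) (hN : 1 ≤ N) :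
    ∫ v : EuclideanSpace ℝ (Fin N),
      rexp (((N:ℝ)+1)⁻¹ * (1 + ‖v‖ ^ 2) / 2) * ((2*π) ^ (-(N:ℝ)/2) * rexp (-‖v‖ ^ 2 / 2))
      = rexp (((N:ℝ)+1)⁻¹/2) / Real.sqrt (1 - ((N:ℝ)+1)⁻¹) ^ N := by
  simp only [gdens_eq N]
  rw [integral_const_mul, gaussE_val N (hdelta_pos N hN)]
  have h1 : π / ((1 - ((N:ℝ)+1)⁻¹)/2) = (2*π) / (1 - ((N:ℝ)+1)⁻¹) := by rw [div_div_eq_mul_div, mul_comm]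
  rw [h1, Real.sqrt_div (by positivity) _, div_pow]
  have h2 : (2*π) ^ (-(N:ℝ)/2) * rexp (((N:ℝ)+1)⁻¹/2)
        * (Real.sqrt (2*π) ^ N / Real.sqrt (1 - ((N:ℝ)+1)⁻¹) ^ N)
      = ((2*π) ^ (-(N:ℝ)/2) * Real.sqrt (2*π) ^ N)
        * (rexp (((N:ℝ)+1)⁻¹/2) / Real.sqrt (1 - ((N:ℝ)+1)⁻¹) ^ N) := by ring
  rw [h2, cnorm N, one_mul]

set_option maxHeartbeats 1000000 in
/-- For a normalized positive measure `F` (mass 1, mean 0, energy `N`) and the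
standard Maxwellian `M`, `‖F-M‖₂ ≤ 2(N+1) ‖F-M‖₀ log(4/‖F-M‖₀)` (with `x log(1/x) = 0` at
`x = 0`, which holds with Lean's conventions `4/0 = 0`, `log 0 = 0`). Here the total variation
`|F - M|` is realized as `(F - M) + (M - F)` with truncated measure subtraction, and
`‖μ‖_s = ∫ ⟨v⟩^s dμ` with `⟨v⟩² = 1 + |v|²`. -/
theorem stmt4 (N : ℕ) (hN : 1 ≤ N)
    (F : Measure (EuclideanSpace ℝ (Fin N))) [IsProbabilityMeasure F]
    (hint : Integrable (fun v => ‖v‖ ^ 2) F)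
    (hmean : ∫ v, v ∂F = 0)
    (henergy : ∫ v, ‖v‖ ^ 2 ∂F = N)
    (M : Measure (EuclideanSpace ℝ (Fin N)))
    (hM : M = volume.withDensity (fun v =>
      ENNReal.ofReal ((2 * π) ^ (-(N : ℝ) / 2) * Real.exp (-‖v‖ ^ 2 / 2)))) :
    (∫⁻ v, ENNReal.ofReal (1 + ‖v‖ ^ 2) ∂((F - M) + (M - F))).toReal
      ≤ 2 * (N + 1) * (((F - M) + (M - F)) Set.univ).toReal
          * Real.log (4 / (((F - M) + (M - F)) Set.univ).toReal) := by
  set E := EuclideanSpace ℝ (Fin N)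
  set dens : E → ℝ := fun v => (2 * π) ^ (-(N : ℝ) / 2) * rexp (-‖v‖ ^ 2 / 2) with hdens_def
  have hdens_nonneg : ∀ v, 0 ≤ dens v := fun v => by positivity
  have hdens_cont : Continuous dens := by
    apply Continuous.mul continuous_const
    exact (continuous_norm.pow 2).neg.div_const 2 |>.rexp
  have hdens_meas : Measurable fun v => ENNReal.ofReal (dens v) :=
    hdens_cont.measurable.ennreal_ofReal
  -- generic conversion lemma
  have conv : ∀ g : E → ℝ, Measurable g → (∀ v, 0 ≤ g v) →
      Integrable (fun v => g v * dens v) volume →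
      ∫⁻ v, ENNReal.ofReal (g v) ∂M = ENNReal.ofReal (∫ v, g v * dens v) := by
    intro g hgm hgnn hgint
    rw [hM, lintegral_withDensity_eq_lintegral_mul _ hdens_meas hgm.ennreal_ofReal]
    rw [ofReal_integral_eq_lintegral_ofReal hgint
      (Filter.Eventually.of_forall fun v => mul_nonneg (hgnn v) (hdens_nonneg v))]
    congr 1
    funext v
    simp only [Pi.mul_apply]
    rw [← ENNReal.ofReal_mul (hdens_nonneg v), mul_comm]
  -- M is a probability measure
  have hMuniv : M Set.univ = 1 := by
    have h1 : ∫⁻ v, ENNReal.ofReal ((1:E → ℝ) v) ∂M = ENNReal.ofReal (∫ v, (1:E → ℝ) v * dens v) :=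
      conv 1 measurable_const (fun v => zero_le_one)
        ((dens_int N).congr (Filter.Eventually.of_forall fun v => by simp [hdens_def]))
    simp only [Pi.one_apply, ENNReal.ofReal_one, lintegral_one, one_mul] at h1
    rw [h1]
    have : ∫ v, dens v = 1 := dens_val N
    rw [this, ENNReal.ofReal_one]
  haveI hMprob : IsProbabilityMeasure M := ⟨hMuniv⟩
  -- lintegrals against M
  have hWM : ∫⁻ v, ENNReal.ofReal (1 + ‖v‖ ^ 2) ∂M = ENNReal.ofReal ((N:ℝ) + 1) := by
    rw [conv (fun v => 1 + ‖v‖ ^ 2) (continuous_const.add (continuous_norm.pow 2)).measurable (fun v => by positivity) (wdens_int N)]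
    rw [wdens_val N]
  have hGM : ∫⁻ v, ENNReal.ofReal (rexp (((N:ℝ)+1)⁻¹ * (1 + ‖v‖ ^ 2) / 2)) ∂M
      ≤ ENNReal.ofReal 2 := by
    rw [conv (fun v => rexp (((N:ℝ)+1)⁻¹ * (1 + ‖v‖ ^ 2) / 2))
      (((continuous_const.mul (continuous_const.add (continuous_norm.pow 2))).div_const 2).rexp.measurable)
      (fun v => (Real.exp_pos _).le) (gdens_int N hN)]
    rw [gdens_val N hN]
    exact ENNReal.ofReal_le_ofReal (keybound N hN)
  -- measure algebra
  have hkey : (F - M) + M = (M - F) + F := hahn_sub_add F M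
  set ρ : Measure E := F - M with hρ_def
  set ν : Measure E := M - F with hν_def
  have hWF : ∫⁻ v, ENNReal.ofReal (1 + ‖v‖ ^ 2) ∂F = ENNReal.ofReal ((N:ℝ) + 1) := by
    have hintF : Integrable (fun v : E => 1 + ‖v‖ ^ 2) F := (integrable_const 1).add hint
    rw [← ofReal_integral_eq_lintegral_ofReal hintF
      (Filter.Eventually.of_forall fun v => by positivity)]
    congr 1
    rw [integral_add (integrable_const 1) hint, henergy, integral_const]
    simp [measure_univ]
    ring
  have hl : ∫⁻ v, ENNReal.ofReal (1 + ‖v‖ ^ 2) ∂ρ + ENNReal.ofReal ((N:ℝ) + 1)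
      = ∫⁻ v, ENNReal.ofReal (1 + ‖v‖ ^ 2) ∂ν + ENNReal.ofReal ((N:ℝ) + 1) := by
    nth_rewrite 2 [← hWF]
    rw [← hWM]
    rw [← lintegral_add_measure, ← lintegral_add_measure, hkey]
  have hWρν : ∫⁻ v, ENNReal.ofReal (1 + ‖v‖ ^ 2) ∂ρ
      = ∫⁻ v, ENNReal.ofReal (1 + ‖v‖ ^ 2) ∂ν :=
    WithTop.add_right_cancel ENNReal.ofReal_ne_top hl
  have hmass : ρ Set.univ = ν Set.univ := by
    have h1 : (ρ + M) Set.univ = (ν + F) Set.univ := by rw [hkey]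
    rw [Measure.add_apply, Measure.add_apply, hMuniv, measure_univ (μ := F)] at h1
    exact WithTop.add_right_cancel ENNReal.one_ne_top h1
  have hν_le_M : ν ≤ M := Measure.sub_le
  have hνW_le : ∫⁻ v, ENNReal.ofReal (1 + ‖v‖ ^ 2) ∂ν ≤ ENNReal.ofReal ((N:ℝ) + 1) := by
    rw [← hWM]; exact lintegral_mono' hν_le_M le_rfl
  have hνG_le : ∫⁻ v, ENNReal.ofReal (rexp (((N:ℝ)+1)⁻¹ * (1 + ‖v‖ ^ 2) / 2)) ∂ν
      ≤ ENNReal.ofReal 2 := le_trans (lintegral_mono' hν_le_M le_rfl) hGM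
  have hνuniv_le : ν Set.univ ≤ 1 := by rw [← hMuniv]; exact hν_le_M Set.univ
  have hνuniv_ne_top : ν Set.univ ≠ ⊤ := ne_top_of_le_ne_top ENNReal.one_ne_top hνuniv_le
  by_cases hz : ν Set.univ = 0
  · have hρz : ρ Set.univ = 0 := by rw [hmass, hz]
    have hν0 : ν = 0 := Measure.measure_univ_eq_zero.mp hz
    have hρ0 : ρ = 0 := Measure.measure_univ_eq_zero.mp hρz
    rw [hρ0, hν0]
    simp
  · set m := (ν Set.univ).toReal with hm_def
    have hm_pos : 0 < m := ENNReal.toReal_pos hz hνuniv_ne_top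
    have hm_le_one : m ≤ 1 := by
      have h := ENNReal.toReal_mono ENNReal.one_ne_top hνuniv_le
      simpa using h
    set δ : ℝ := ((N:ℝ)+1)⁻¹ with hδ_def
    set g : E → ℝ := fun v => rexp (δ * (1 + ‖v‖ ^ 2) / 2) with hg_def
    have hw_cont : Continuous fun v : E => 1 + ‖v‖ ^ 2 :=
      continuous_const.add (continuous_norm.pow 2)
    have hg_cont : Continuous g := ((continuous_const.mul hw_cont).div_const 2).rexp
    have hw_int : Integrable (fun v : E => 1 + ‖v‖ ^ 2) ν := by
      refine ⟨hw_cont.aestronglyMeasurable, ?_⟩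
      rw [hasFiniteIntegral_iff_norm]
      have he : ∀ v : E, ENNReal.ofReal ‖1 + ‖v‖ ^ 2‖ = ENNReal.ofReal (1 + ‖v‖ ^ 2) := by
        intro v; rw [Real.norm_eq_abs, abs_of_nonneg (by positivity)]
      calc ∫⁻ v, ENNReal.ofReal ‖1 + ‖v‖ ^ 2‖ ∂ν
          = ∫⁻ v, ENNReal.ofReal (1 + ‖v‖ ^ 2) ∂ν := lintegral_congr he
        _ ≤ ENNReal.ofReal ((N:ℝ) + 1) := hνW_le
        _ < ⊤ := ENNReal.ofReal_lt_top
    have hg_int : Integrable g ν := by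
      refine ⟨hg_cont.aestronglyMeasurable, ?_⟩
      rw [hasFiniteIntegral_iff_norm]
      have he : ∀ v : E, ENNReal.ofReal ‖g v‖ = ENNReal.ofReal (g v) := by
        intro v; rw [Real.norm_eq_abs, abs_of_nonneg (Real.exp_pos _).le]
      calc ∫⁻ v, ENNReal.ofReal ‖g v‖ ∂ν
          = ∫⁻ v, ENNReal.ofReal (g v) ∂ν := lintegral_congr he
        _ ≤ ENNReal.ofReal 2 := hνG_le
        _ < ⊤ := ENNReal.ofReal_lt_top
    have ha_eq : ∫ v, (1 + ‖v‖ ^ 2) ∂ν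
        = (∫⁻ v, ENNReal.ofReal (1 + ‖v‖ ^ 2) ∂ν).toReal :=
      integral_eq_lintegral_of_nonneg_ae
        (Filter.Eventually.of_forall fun v => by positivity) hw_cont.aestronglyMeasurable
    have hb_le : ∫ v, g v ∂ν ≤ 2 := by
      have h1 : ∫ v, g v ∂ν = (∫⁻ v, ENNReal.ofReal (g v) ∂ν).toReal :=
        integral_eq_lintegral_of_nonneg_ae
          (Filter.Eventually.of_forall fun v => (Real.exp_pos _).le) hg_cont.aestronglyMeasurable
      rw [h1]
      calc (∫⁻ v, ENNReal.ofReal (g v) ∂ν).toReal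
          ≤ (ENNReal.ofReal 2).toReal := ENNReal.toReal_mono ENNReal.ofReal_ne_top hνG_le
        _ = 2 := ENNReal.toReal_ofReal (by norm_num)
    have hδ_pos : 0 < δ := by rw [hδ_def]; positivity
    have hδ_mul : ((N:ℝ)+1) * δ = 1 := by
      rw [hδ_def]; exact mul_inv_cancel₀ (by positivity)
    have hpt : ∀ v : E, 1 + ‖v‖ ^ 2
        ≤ (2*((N:ℝ)+1)) * ((m/2) * g v + (Real.log (2/m) - 1)) := by
      intro v
      have h1 := Real.add_one_le_exp (δ * (1 + ‖v‖ ^ 2) / 2 + Real.log (m/2))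
      rw [Real.exp_add, Real.exp_log (by positivity : (0:ℝ) < m/2)] at h1
      have h2 : Real.log (m/2) = - Real.log (2/m) := by rw [← Real.log_inv, inv_div]
      rw [h2] at h1
      rw [hg_def]
      have h3 := mul_le_mul_of_nonneg_left h1 (by positivity : (0:ℝ) ≤ 2*((N:ℝ)+1))
      nlinarith [h3, hδ_mul]
    have hRHS_int : Integrable
        (fun v : E => (2*((N:ℝ)+1)) * ((m/2) * g v + (Real.log (2/m) - 1))) ν :=
      ((hg_int.const_mul (m/2)).add (integrable_const _)).const_mul _
    have hInt := integral_mono hw_int hRHS_int hpt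
    rw [integral_const_mul, integral_add (hg_int.const_mul _) (integrable_const _),
      integral_const_mul, integral_const, smul_eq_mul, measureReal_def, ← hm_def] at hInt
    have hC : (0:ℝ) ≤ 2*((N:ℝ)+1) := by positivity
    have ha : ∫ v, (1 + ‖v‖ ^ 2) ∂ν ≤ 2*((N:ℝ)+1) * (m * Real.log (2/m)) := by
      nlinarith [hInt, mul_nonneg (mul_nonneg hC (by linarith : (0:ℝ) ≤ m/2))
        (by linarith [hb_le] : (0:ℝ) ≤ 2 - ∫ v, g v ∂ν)]
    have hfin : ∫⁻ v, ENNReal.ofReal (1 + ‖v‖ ^ 2) ∂ν ≠ ⊤ :=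
      ne_top_of_le_ne_top ENNReal.ofReal_ne_top hνW_le
    rw [lintegral_add_measure, hWρν, Measure.add_apply, hmass,
      ENNReal.toReal_add hfin hfin, ENNReal.toReal_add hνuniv_ne_top hνuniv_ne_top, ← hm_def]
    have h42 : (4:ℝ) / (m + m) = 2 / m := by
      rw [show m + m = 2*m by ring, show (4:ℝ) = 2*2 by norm_num]
      exact mul_div_mul_left 2 m two_ne_zero
    rw [h42, ← ha_eq]
    push_cast
    nlinarith [ha]
end

section
/- Let $A>0$, $0<\gamma<2$, and let $U:[0,\infty)\to(0,2/3)$ be locally Lipschitz with $\left|\frac{d}{dt}U(t)\right|\le A\,U(t)\left[\log\frac{1}{U(t)}\right]^{\gamma/2}$ for a.e. $t>0$. Then for all $t\ge 0$, $\left[\log\frac{1}{U(t)}\right]^{1-\gamma/2}\le\left[\log\frac{1}{U(0)}\right]^{1-\gamma/2}+(1-\gamma/2)A\,t$, and consequently $U(t)\ge U(0)^{\alpha}\exp\left(-\beta_1 t^{\frac{2}{2-\gamma}}\right)$ where $\alpha=(2/\gamma)^{\gamma/(2-\gamma)}$ and $\beta_1=(1-\gamma/2)A^{2/(2-\gamma)}$.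 -/
open Real MeasureTheory Filter Topology

private lemma aux_seq_pos (n : ℕ) : (0:ℝ) < 1/((n:ℝ)+1) := by positivity

private lemma aux_seq_tendsto : Tendsto (fun n : ℕ => (1:ℝ)/((n:ℝ)+1)) atTop (𝓝 0) :=
  tendsto_one_div_add_atTop_nhds_zero_nat

private lemma aux_slope {g : ℝ → ℝ} {x d : ℝ} (h : HasDerivAt g d x) :
    Tendsto (fun n : ℕ => (g (x + 1/((n:ℝ)+1)) - g x) / (1/((n:ℝ)+1))) atTop (𝓝 d) := by
  have h1 := hasDerivAt_iff_tendsto_slope.mp h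
  have h2 : Tendsto (fun n : ℕ => x + 1/((n:ℝ)+1)) atTop (𝓝[≠] x) := by
    apply tendsto_nhdsWithin_of_tendsto_nhds_of_eventually_within
    · simpa using tendsto_const_nhds.add aux_seq_tendsto
    · exact Eventually.of_forall fun n => by
        have := aux_seq_pos n
        simp only [Set.mem_compl_iff, Set.mem_singleton_iff]
        intro hc
        nlinarith [aux_seq_pos n, congrArg (fun y => y - x) hc]
  have h3 := h1.comp h2
  convert h3 using 2 with n
  simp [slope_def_field]

private lemma key_gronwall {g : ℝ → ℝ} {L : NNReal} (hg : LipschitzWith L g)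
    {a b M : ℝ} (hab : a ≤ b)
    (hM : ∀ᵐ x : ℝ ∂volume, x ∈ Set.Ioo a b → ∀ d : ℝ, HasDerivAt g d x → d ≤ M) :
    g b - g a ≤ M * (b - a) := by
  have hcont : Continuous g := hg.continuous
  have hInt : ∀ c d : ℝ, IntervalIntegrable g volume c d := fun c d =>
    hcont.intervalIntegrable c d
  set h : ℕ → ℝ := fun n => 1/((n:ℝ)+1) with hh
  -- endpoint limits
  have hend : ∀ c : ℝ, Tendsto (fun n => (∫ x in c..(c + h n), g x) / h n)
      atTop (𝓝 (g c)) := by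
    intro c
    have hG : HasDerivAt (fun u => ∫ x in c..u, g x) (g c) c :=
      intervalIntegral.integral_hasDerivAt_right (hInt c c)
        (hcont.stronglyMeasurable.stronglyMeasurableAtFilter) hcont.continuousAt
    have h4 := aux_slope hG
    simp only [intervalIntegral.integral_same, sub_zero] at h4
    exact h4
  set F : ℕ → ℝ → ℝ := fun n x => (g (x + h n) - g x) / h n with hF
  have hdiff := hg.ae_differentiableAt_real
  have hconst : Integrable (fun _ : ℝ => (L:ℝ)) (volume.restrict (Set.Ioc a b)) :=
    integrableOn_const measure_Ioc_lt_top.ne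
  have hmeas : ∀ n, AEStronglyMeasurable (F n) (volume.restrict (Set.Ioc a b)) := fun n =>
    (((hcont.comp (continuous_id.add continuous_const)).sub hcont).div_const
      _).aestronglyMeasurable.restrict
  have hbound : ∀ n, ∀ᵐ x ∂(volume.restrict (Set.Ioc a b)), ‖F n x‖ ≤ (L:ℝ) := by
    intro n
    refine Eventually.of_forall fun x => ?_
    have hpos : 0 < h n := aux_seq_pos n
    have h1 : |g (x + h n) - g x| ≤ (L:ℝ) * h n := by
      have h2 := hg.dist_le_mul (x + h n) x
      rw [Real.dist_eq, Real.dist_eq, add_sub_cancel_left, abs_of_pos hpos] at h2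
      exact h2
    show |(g (x + h n) - g x) / h n| ≤ (L:ℝ)
    rw [abs_div, abs_of_pos hpos, div_le_iff₀ hpos]
    linarith
  have hlim : ∀ᵐ x ∂(volume.restrict (Set.Ioc a b)),
      Tendsto (fun n => F n x) atTop (𝓝 (deriv g x)) := by
    refine ae_restrict_of_ae ?_
    filter_upwards [hdiff] with x hx
    exact aux_slope hx.hasDerivAt
  have hDCT := MeasureTheory.tendsto_integral_of_dominated_convergence
      (fun _ => (L:ℝ)) hmeas hconst hbound hlim
  have hid : ∀ n, ∫ x in Set.Ioc a b, F n x =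
      (∫ x in b..(b + h n), g x) / h n - (∫ x in a..(a + h n), g x) / h n := by
    intro n
    have e1 : ∫ x in Set.Ioc a b, F n x = ∫ x in a..b, F n x :=
      (intervalIntegral.integral_of_le hab).symm
    have hginth : IntervalIntegrable (fun x => g (x + h n)) volume a b :=
      (hcont.comp (continuous_id.add continuous_const)).intervalIntegrable a b
    have e2 : ∫ x in a..b, F n x
        = ((∫ x in a..b, g (x + h n)) - ∫ x in a..b, g x) / h n := by
      simp only [hF]
      rw [intervalIntegral.integral_div, intervalIntegral.integral_sub hginth (hInt a b)]
    have e3 : (∫ x in a..b, g (x + h n)) = ∫ x in (a + h n)..(b + h n), g x :=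
      intervalIntegral.integral_comp_add_right g (h n)
    have c1 := intervalIntegral.integral_add_adjacent_intervals
      (hInt a (a + h n)) (hInt (a + h n) (b + h n))
    have c2 := intervalIntegral.integral_add_adjacent_intervals (hInt a b) (hInt b (b + h n))
    rw [e1, e2, e3, ← sub_div]
    congr 1
    linarith
  have hconv2 : Tendsto (fun n => ∫ x in Set.Ioc a b, F n x) atTop (𝓝 (g b - g a)) := by
    have := (hend b).sub (hend a)
    refine Tendsto.congr (fun n => (hid n).symm) this
  have hkey : ∫ x in Set.Ioc a b, deriv g x = g b - g a := tendsto_nhds_unique hDCT hconv2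
  have hne_b : ∀ᵐ x : ℝ ∂volume, x ≠ b := by
    refine ae_iff.mpr ?_
    simp
  have hder_le : ∀ᵐ x ∂(volume.restrict (Set.Ioc a b)), deriv g x ≤ M := by
    refine (ae_restrict_iff' measurableSet_Ioc).2 ?_
    filter_upwards [hM, hdiff, hne_b] with x hx hdx hxb hxIoc
    exact hx ⟨hxIoc.1, lt_of_le_of_ne hxIoc.2 hxb⟩ _ hdx.hasDerivAt
  have hder_int : IntegrableOn (deriv g) (Set.Ioc a b) volume := by
    refine Integrable.mono' hconst ((measurable_deriv g).aestronglyMeasurable.restrict) ?_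
    refine ae_restrict_of_ae ?_
    filter_upwards [hdiff] with x hx
    exact hx.hasDerivAt.le_of_lipschitz hg
  have hconstM : Integrable (fun _ : ℝ => M) (volume.restrict (Set.Ioc a b)) :=
    integrableOn_const measure_Ioc_lt_top.ne
  have hle : ∫ x in Set.Ioc a b, deriv g x ≤ ∫ _x in Set.Ioc a b, M :=
    setIntegral_mono_ae_restrict hder_int hconstM hder_le
  rw [hkey] at hle
  rwa [setIntegral_const, measureReal_def, Real.volume_Ioc, ENNReal.toReal_ofReal (by linarith : (0:ℝ) ≤ b - a),
    smul_eq_mul, mul_comm] at hle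

private lemma hasDerivAt_neglog_rpow {c z : ℝ} (hz : 0 < z) (hz1 : z < 1) :
    HasDerivAt (fun y => (-Real.log y) ^ c) (c * (-Real.log z) ^ (c - 1) * (-z⁻¹)) z := by
  have hlz : 0 < -Real.log z := by
    have := Real.log_neg hz hz1; linarith
  have h1 : HasDerivAt (fun y : ℝ => -Real.log y) (-z⁻¹) z := (Real.hasDerivAt_log hz.ne').neg
  have h2 : HasDerivAt (fun w : ℝ => w ^ c) (c * (-Real.log z) ^ (c - 1)) (-Real.log z) :=
    Real.hasDerivAt_rpow_const (Or.inl hlz.ne')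
  exact h2.comp z h1

private lemma part1_main (A γ : ℝ) (hA : 0 < A) (hγ0 : 0 < γ) (hγ2 : γ < 2)
    (U : ℝ → ℝ)
    (hrange : ∀ t ≥ (0 : ℝ), 0 < U t ∧ U t < 2 / 3)
    (hlip : ∀ K : Set ℝ, IsCompact K → K ⊆ Set.Ici 0 → ∃ L : NNReal, LipschitzOnWith L U K)
    (hder : ∀ᵐ t : ℝ ∂volume, 0 < t → ∀ d : ℝ, HasDerivAt U d t →
      |d| ≤ A * U t * (Real.log (1 / U t)) ^ (γ / 2)) :
    ∀ t ≥ (0 : ℝ), (-Real.log (U t)) ^ (1 - γ / 2)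
      ≤ (-Real.log (U 0)) ^ (1 - γ / 2) + (1 - γ / 2) * A * t := by
  intro T hT
  rcases eq_or_lt_of_le hT with hT0 | hT0
  · rw [← hT0]; simp
  set c : ℝ := 1 - γ / 2 with hc
  have hc0 : 0 < c := by rw [hc]; linarith
  have hc1 : c < 1 := by rw [hc]; linarith
  obtain ⟨L, hL⟩ := hlip (Set.Icc 0 T) isCompact_Icc (fun x hx => hx.1)
  have hUcont : ContinuousOn U (Set.Icc 0 T) := hL.continuousOn
  have hne : (Set.Icc 0 T).Nonempty := Set.nonempty_Icc.2 hT
  obtain ⟨tm, htm, hmin⟩ := isCompact_Icc.exists_isMinOn hne hUcont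
  obtain ⟨tM, htM, hmax⟩ := isCompact_Icc.exists_isMaxOn hne hUcont
  set m := U tm with hm
  set Mx := U tM with hMx
  have hm0 : 0 < m := (hrange tm htm.1).1
  have hM23 : Mx < 2 / 3 := (hrange tM htM.1).2
  have hM1 : Mx < 1 := by linarith
  have hmM : m ≤ Mx := hmin htM
  obtain ⟨g, hglip, hgeq⟩ := hL.extend_real
  set V : ℝ → ℝ := fun x => max (min (g x) Mx) m with hV
  have hVlip : LipschitzWith L V := (hglip.min_const Mx).max_const m
  have hVeq : ∀ x ∈ Set.Icc 0 T, V x = U x := by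
    intro x hx
    have h1 : g x = U x := (hgeq hx).symm
    have h2 : U x ≤ Mx := hmax hx
    have h3 : m ≤ U x := hmin hx
    rw [hV]
    simp only [h1, min_eq_left h2, max_eq_left h3]
  have hVm : ∀ x, m ≤ V x := fun x => le_max_right _ _
  have hVM : ∀ x, V x ≤ Mx := fun x => max_le (min_le_right _ _) hmM
  -- Lipschitz bound for φ := fun y => (-log y) ^ c on [m, Mx]
  set w0 : ℝ := -Real.log Mx with hw0
  have hMx0 : 0 < Mx := hm0.trans_le hmM
  have hw0pos : 0 < w0 := by
    have := Real.log_neg hMx0 hM1; rw [hw0]; linarith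
  set B : ℝ := c * w0 ^ (c - 1) * m⁻¹ with hB
  have hφd : ∀ z ∈ Set.Icc m Mx, HasDerivAt (fun y => (-Real.log y) ^ c)
      (c * (-Real.log z) ^ (c - 1) * (-z⁻¹)) z := fun z hz =>
    hasDerivAt_neglog_rpow (hm0.trans_le hz.1) (lt_of_le_of_lt hz.2 hM1)
  have hφbound : ∀ z ∈ Set.Icc m Mx, ‖c * (-Real.log z) ^ (c - 1) * (-z⁻¹)‖ ≤ B := by
    intro z hz
    have hz0 : 0 < z := hm0.trans_le hz.1
    have hz1 : z < 1 := lt_of_le_of_lt hz.2 hM1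
    have hlz : 0 < -Real.log z := by have := Real.log_neg hz0 hz1; linarith
    have hwle : w0 ≤ -Real.log z := by
      have := Real.log_le_log hz0 hz.2
      rw [hw0]; linarith
    have h1 : (-Real.log z) ^ (c - 1) ≤ w0 ^ (c - 1) :=
      Real.rpow_le_rpow_of_nonpos hw0pos hwle (by linarith)
    have h2 : z⁻¹ ≤ m⁻¹ := by
      rw [inv_le_inv₀ hz0 hm0]
      exact hz.1
    have habs : |c * (-Real.log z) ^ (c - 1) * (-z⁻¹)| = c * (-Real.log z) ^ (c - 1) * z⁻¹ := by
      rw [abs_mul, abs_mul, abs_neg, abs_inv, abs_of_pos hc0,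
        abs_of_pos (Real.rpow_pos_of_pos hlz _), abs_of_pos hz0]
    rw [Real.norm_eq_abs, habs, hB]
    gcongr
  have hφlip : LipschitzOnWith B.toNNReal (fun y => (-Real.log y) ^ c) (Set.Icc m Mx) := by
    refine Convex.lipschitzOnWith_of_nnnorm_hasDerivWithin_le (convex_Icc m Mx)
      (f' := fun z => c * (-Real.log z) ^ (c - 1) * (-z⁻¹))
      (fun z hz => (hφd z hz).hasDerivWithinAt) ?_
    intro z hz
    rw [← NNReal.coe_le_coe, coe_nnnorm, Real.coe_toNNReal']
    exact le_max_of_le_left (hφbound z hz)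
  have hFlip : LipschitzWith (B.toNNReal * L) ((fun y => (-Real.log y) ^ c) ∘ V) := by
    rw [← lipschitzOnWith_univ]
    exact hφlip.comp ((lipschitzOnWith_univ).2 hVlip) (fun x _ => ⟨hVm x, hVM x⟩)
  have hae : ∀ᵐ x : ℝ ∂volume, x ∈ Set.Ioo 0 T → ∀ d : ℝ,
      HasDerivAt ((fun y => (-Real.log y) ^ c) ∘ V) d x → d ≤ c * A := by
    filter_upwards [hder, hVlip.ae_differentiableAt_real] with x hx hVd
    intro hxIoo d hdF
    have hmem : Set.Icc 0 T ∈ 𝓝 x := Icc_mem_nhds hxIoo.1 hxIoo.2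
    have hxm : x ∈ Set.Icc 0 T := ⟨hxIoo.1.le, hxIoo.2.le⟩
    have hUV : U =ᶠ[𝓝 x] V := eventually_of_mem hmem (fun y hy => (hVeq y hy).symm)
    have hdV : HasDerivAt V (deriv V x) x := hVd.hasDerivAt
    have hdU : HasDerivAt U (deriv V x) x := hdV.congr_of_eventuallyEq hUV
    have hzU := hrange x hxIoo.1.le
    have hbd := hx hxIoo.1 _ hdU
    rw [one_div, Real.log_inv] at hbd
    have hz0 : 0 < U x := hzU.1
    have hz1 : U x < 1 := by linarith [hzU.2]
    have hφ : HasDerivAt (fun y => (-Real.log y) ^ c)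
        (c * (-Real.log (U x)) ^ (c - 1) * (-(U x)⁻¹)) (V x) := by
      rw [hVeq x hxm]; exact hasDerivAt_neglog_rpow hz0 hz1
    have hcomp := hφ.comp x hdV
    have hd : d = c * (-Real.log (U x)) ^ (c - 1) * (-(U x)⁻¹) * deriv V x := hdF.unique hcomp
    have hlz : 0 < -Real.log (U x) := by have := Real.log_neg hz0 hz1; linarith
    calc d ≤ |d| := le_abs_self d
    _ = c * (-Real.log (U x)) ^ (c - 1) * (U x)⁻¹ * |deriv V x| := by
        rw [hd, abs_mul, abs_mul, abs_mul, abs_neg, abs_inv, abs_of_pos hc0,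
          abs_of_pos (Real.rpow_pos_of_pos hlz _), abs_of_pos hz0]
    _ ≤ c * (-Real.log (U x)) ^ (c - 1) * (U x)⁻¹ * (A * U x * (-Real.log (U x)) ^ (γ / 2)) := by
        gcongr
    _ = c * A * ((-Real.log (U x)) ^ (c - 1) * (-Real.log (U x)) ^ (γ / 2)) := by
        field_simp
    _ = c * A * (-Real.log (U x)) ^ (c - 1 + γ / 2) := by rw [← Real.rpow_add hlz]
    _ = c * A := by
        have he : c - 1 + γ / 2 = 0 := by rw [hc]; ring
        rw [he, Real.rpow_zero, mul_one]
  have hkey := key_gronwall hFlip (le_of_lt hT0) hae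
  have e0 : ((fun y => (-Real.log y) ^ c) ∘ V) 0 = (-Real.log (U 0)) ^ c := by
    simp only [Function.comp_apply, hVeq 0 ⟨le_refl 0, hT0.le⟩]
  have eT : ((fun y => (-Real.log y) ^ c) ∘ V) T = (-Real.log (U T)) ^ c := by
    simp only [Function.comp_apply, hVeq T ⟨hT0.le, le_refl T⟩]
  rw [e0, eT, sub_zero] at hkey
  linarith

/-- If `U : [0,∞) → (0, 2/3)` is locally Lipschitz and
`|U'(t)| ≤ A U(t) [log(1/U(t))]^{γ/2}` a.e., then
`[log(1/U(t))]^{1-γ/2} ≤ [log(1/U(0))]^{1-γ/2} + (1-γ/2) A t`, and consequently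
`U(t) ≥ U(0)^α exp(-β₁ t^{2/(2-γ)})` with `α = (2/γ)^{γ/(2-γ)}`,
`β₁ = (1-γ/2) A^{2/(2-γ)}`. -/
theorem stmt7 (A γ : ℝ) (hA : 0 < A) (hγ0 : 0 < γ) (hγ2 : γ < 2)
    (U : ℝ → ℝ)
    (hrange : ∀ t ≥ (0 : ℝ), 0 < U t ∧ U t < 2 / 3)
    (hlip : ∀ K : Set ℝ, IsCompact K → K ⊆ Set.Ici 0 → ∃ L : NNReal, LipschitzOnWith L U K)
    (hder : ∀ᵐ t : ℝ ∂volume, 0 < t → ∀ d : ℝ, HasDerivAt U d t →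
      |d| ≤ A * U t * (Real.log (1 / U t)) ^ (γ / 2)) :
    ∀ t ≥ (0 : ℝ),
      (Real.log (1 / U t)) ^ (1 - γ / 2)
          ≤ (Real.log (1 / U 0)) ^ (1 - γ / 2) + (1 - γ / 2) * A * t
      ∧ U t ≥ U 0 ^ ((2 / γ) ^ (γ / (2 - γ)))
            * Real.exp (-((1 - γ / 2) * A ^ (2 / (2 - γ))) * t ^ (2 / (2 - γ))) := by
  have hp1 := part1_main A γ hA hγ0 hγ2 U hrange hlip hder
  intro t ht
  have hc0 : (0:ℝ) < 1 - γ / 2 := by linarith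
  have hUt := hrange t ht
  have hU0 := hrange 0 le_rfl
  have hYpos : 0 < -Real.log (U t) := by
    have := Real.log_neg hUt.1 (by linarith [hUt.2]); linarith
  have hXpos : 0 < -Real.log (U 0) := by
    have := Real.log_neg hU0.1 (by linarith [hU0.2]); linarith
  have hP1 : (-Real.log (U t)) ^ (1 - γ / 2)
      ≤ (-Real.log (U 0)) ^ (1 - γ / 2) + (1 - γ / 2) * A * t := hp1 t ht
  constructor
  · rw [one_div, one_div, Real.log_inv, Real.log_inv]
    exact hP1
  · set c : ℝ := 1 - γ / 2 with hc
    set p : ℝ := 2 / (2 - γ) with hp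
    have h2γ : (0:ℝ) < 2 - γ := by linarith
    have hp1' : 1 ≤ p := by rw [hp, le_div_iff₀ h2γ]; linarith
    have hppos : 0 < p := lt_of_lt_of_le one_pos hp1'
    have hcp : c * p = 1 := by rw [hc, hp]; field_simp
    have hpm1 : p - 1 = γ / (2 - γ) := by rw [hp]; field_simp; ring
    set X : ℝ := -Real.log (U 0) with hX
    set Y : ℝ := -Real.log (U t) with hY
    set x : ℝ := X ^ c with hxd
    have hga2 : (0:ℝ) < γ / 2 := by linarith
    have hx0 : 0 ≤ x := (Real.rpow_pos_of_pos hXpos c).le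
    have hy0 : 0 ≤ A * t := by positivity
    set α : ℝ := (2 / γ) ^ (γ / (2 - γ)) with hα
    -- key convexity inequality
    have hconv := (convexOn_rpow hp1').2 (Set.mem_Ici.2 (by positivity : (0:ℝ) ≤ x / (γ/2)))
      (Set.mem_Ici.2 hy0) hga2.le hc0.le (by rw [hc]; ring)
    simp only [smul_eq_mul] at hconv
    have he1 : γ / 2 * (x / (γ / 2)) = x := by field_simp
    rw [he1] at hconv
    have h3 : x ^ p = X := by
      rw [hxd, ← Real.rpow_mul hXpos.le, hcp, Real.rpow_one]
    have hαeq : (γ / 2) ^ (1 - p) = α := by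
      have hinv : (γ / 2 : ℝ) = (2 / γ)⁻¹ := by rw [inv_div]
      rw [hα, ← hpm1, hinv, Real.inv_rpow (by positivity), ← Real.rpow_neg (by positivity),
        neg_sub]
    have he2 : γ / 2 * (x / (γ / 2)) ^ p = α * X := by
      rw [Real.div_rpow hx0 hga2.le, h3, ← hαeq, Real.rpow_sub hga2, Real.rpow_one]
      ring
    have hAt : (A * t) ^ p = A ^ p * t ^ p := Real.mul_rpow hA.le ht
    have h4 : Y = (Y ^ c) ^ p := by rw [← Real.rpow_mul hYpos.le, hcp, Real.rpow_one]
    have h5 : (Y ^ c) ^ p ≤ (x + c * (A * t)) ^ p := by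
      apply Real.rpow_le_rpow (Real.rpow_pos_of_pos hYpos c).le ?_ hppos.le
      calc Y ^ c ≤ X ^ c + c * A * t := hP1
      _ = x + c * (A * t) := by rw [hxd]; ring
    have hYle : Y ≤ α * X + c * (A ^ p * t ^ p) := by
      calc Y = (Y ^ c) ^ p := h4
      _ ≤ (x + c * (A * t)) ^ p := h5
      _ ≤ γ / 2 * (x / (γ / 2)) ^ p + c * (A * t) ^ p := hconv
      _ = α * X + c * (A ^ p * t ^ p) := by rw [he2, hAt]
    have hUteq : U t = Real.exp (-Y) := by rw [hY, neg_neg, Real.exp_log hUt.1]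
    have hrhs : U 0 ^ α * Real.exp (-(c * A ^ p) * t ^ p)
        = Real.exp (-(α * X + c * (A ^ p * t ^ p))) := by
      rw [Real.rpow_def_of_pos hU0.1, ← Real.exp_add]
      congr 1
      have hlog : Real.log (U 0) = -X := by rw [hX, neg_neg]
      rw [hlog]; ring
    rw [ge_iff_le, hrhs, hUteq]
    exact Real.exp_le_exp.2 (by linarith)
end

section
/- Let $N\ge 1$ and let $F$, $G$ be finite positive Borel measures on $\mathbb{R}^N$ in $\mathcal{B}_{s+\gamma}$ (i.e. $\int\langle v\rangle^{s+\gamma}d|F|<\infty$, likewise for $G$), with $\gamma\in(0,2]$, $s\ge 0$. Define $Q^-(F,G)$ by $\int\psi\,dQ^-(F,G)=A_0\int\int|v-v_*|^{\gamma}\psi(v)\,dF(v)\,dG(v_*)$ for bounded Borel $\psi$, where $A_0>0$. Then $\|Q^-(F,F)-Q^-(G,G)\|_{s}\le 2^{(s+\gamma)/2}A_0\big(\|F+G\|_{s+\gamma}\|F-G\|_{0}+\|F+G\|_{0}\|F-G\|_{s+\gamma}\big)$, where $\|\mu\|_s=\int\langle v\rangle^s\,d|\mu|$. -/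
open MeasureTheory Real ENNReal

section Aux
open NNReal Set

private lemma rpow_split {a b q g : ℝ} (ha : 0 < a) (hb : 0 < b)
    (hg : 0 < g) (hg2 : g / 2 ≤ 1) (hgq : g / 2 ≤ q) :
    (a + b) ^ q ≤ 2 ^ (q - g / 2) * (a ^ q + b ^ q) := by
  have hq : 0 < q := lt_of_lt_of_le (by positivity) hgq
  rcases le_total q 1 with hq1 | hq1
  · have h := NNReal.rpow_add_le_add_rpow a.toNNReal b.toNNReal hq.le hq1
    have h' : ((a.toNNReal + b.toNNReal : ℝ≥0) : ℝ) ^ q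
        ≤ ((a.toNNReal : ℝ)) ^ q + ((b.toNNReal : ℝ)) ^ q := by
      have := NNReal.coe_le_coe.2 h
      simpa [NNReal.coe_rpow] using this
    rw [NNReal.coe_add, Real.coe_toNNReal _ ha.le, Real.coe_toNNReal _ hb.le] at h'
    have h1 : (1:ℝ) ≤ 2 ^ (q - g / 2) := by
      calc (1:ℝ) = 2 ^ (0:ℝ) := by norm_num
        _ ≤ 2 ^ (q - g / 2) := Real.rpow_le_rpow_of_exponent_le one_le_two (by linarith)
    calc (a + b) ^ q ≤ a ^ q + b ^ q := h'
      _ ≤ 2 ^ (q - g / 2) * (a ^ q + b ^ q) := le_mul_of_one_le_left (by positivity) h1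
  · have h := NNReal.rpow_add_le_mul_rpow_add_rpow a.toNNReal b.toNNReal hq1
    have h' : ((a.toNNReal + b.toNNReal : ℝ≥0) : ℝ) ^ q
        ≤ (2:ℝ) ^ (q - 1) * (((a.toNNReal : ℝ)) ^ q + ((b.toNNReal : ℝ)) ^ q) := by
      have := NNReal.coe_le_coe.2 h
      simpa [NNReal.coe_rpow, NNReal.coe_mul, NNReal.coe_add] using this
    rw [NNReal.coe_add, Real.coe_toNNReal _ ha.le, Real.coe_toNNReal _ hb.le] at h'
    calc (a + b) ^ q ≤ (2:ℝ) ^ (q - 1) * (a ^ q + b ^ q) := h'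
      _ ≤ 2 ^ (q - g / 2) * (a ^ q + b ^ q) := by
          refine mul_le_mul_of_nonneg_right ?_ (by positivity)
          exact Real.rpow_le_rpow_of_exponent_le one_le_two (by linarith)

private lemma real_key {γ s x y d : ℝ} (hγ0 : 0 < γ) (hγ2 : γ ≤ 2) (hs : 0 ≤ s)
    (hd0 : 0 ≤ d) (hdxy : d ≤ x + y) :
    d ^ γ * (1 + x ^ 2) ^ (s / 2)
      ≤ 2 ^ ((s + γ) / 2) * ((1 + x ^ 2) ^ ((s + γ) / 2) + (1 + y ^ 2) ^ ((s + γ) / 2)) := by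
  have ha : (0:ℝ) < 1 + x ^ 2 := by positivity
  have hb : (0:ℝ) < 1 + y ^ 2 := by positivity
  have hd2 : d ^ 2 ≤ 2 * ((1 + x ^ 2) + (1 + y ^ 2)) := by nlinarith [sq_nonneg (x - y)]
  have h1 : d ^ γ ≤ (2 * ((1 + x ^ 2) + (1 + y ^ 2))) ^ (γ / 2) := by
    have hdg : d ^ γ = (d ^ 2) ^ (γ / 2) := by
      rw [← Real.rpow_natCast d 2, ← Real.rpow_mul hd0]
      congr 1
      push_cast
      ring
    rw [hdg]
    exact Real.rpow_le_rpow (by positivity) hd2 (by positivity)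
  have h2 : (1 + x ^ 2) ^ (s / 2) ≤ ((1 + x ^ 2) + (1 + y ^ 2)) ^ (s / 2) :=
    Real.rpow_le_rpow ha.le (by nlinarith) (by positivity)
  have h3 : d ^ γ * (1 + x ^ 2) ^ (s / 2)
      ≤ 2 ^ (γ / 2) * ((1 + x ^ 2) + (1 + y ^ 2)) ^ ((s + γ) / 2) := by
    calc d ^ γ * (1 + x ^ 2) ^ (s / 2)
        ≤ (2 * ((1 + x ^ 2) + (1 + y ^ 2))) ^ (γ / 2) * ((1 + x ^ 2) + (1 + y ^ 2)) ^ (s / 2) :=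
          mul_le_mul h1 h2 (by positivity) (by positivity)
      _ = 2 ^ (γ / 2) * ((1 + x ^ 2) + (1 + y ^ 2)) ^ ((s + γ) / 2) := by
          rw [Real.mul_rpow (by norm_num) (by positivity), mul_assoc,
            ← Real.rpow_add (by positivity)]
          ring_nf
  have h4 := rpow_split (q := (s + γ) / 2) (g := γ) ha hb hγ0 (by linarith) (by linarith)
  calc d ^ γ * (1 + x ^ 2) ^ (s / 2)
      ≤ 2 ^ (γ / 2) * ((1 + x ^ 2) + (1 + y ^ 2)) ^ ((s + γ) / 2) := h3
    _ ≤ 2 ^ (γ / 2) * (2 ^ ((s + γ) / 2 - γ / 2)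
          * ((1 + x ^ 2) ^ ((s + γ) / 2) + (1 + y ^ 2) ^ ((s + γ) / 2))) :=
        mul_le_mul_of_nonneg_left h4 (by positivity)
    _ = 2 ^ ((s + γ) / 2) * ((1 + x ^ 2) ^ ((s + γ) / 2) + (1 + y ^ 2) ^ ((s + γ) / 2)) := by
        rw [← mul_assoc, ← Real.rpow_add two_pos]
        ring_nf

private lemma meas_le_sub_add {α : Type*} [MeasurableSpace α] (μ ν : Measure α)
    [IsFiniteMeasure μ] [IsFiniteMeasure ν] : μ ≤ (μ - ν) + ν := by
  obtain ⟨t, ht, hνμ, hμν⟩ := hahn_decomposition (μ := μ) (ν := ν)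
  rw [Measure.le_iff]
  intro u hu
  have hr : ν.restrict t ≤ μ.restrict t := by
    rw [Measure.le_iff]
    intro a ha
    rw [Measure.restrict_apply ha, Measure.restrict_apply ha]
    exact hνμ _ (ha.inter ht) inter_subset_right
  have h1 : (μ - ν) (u ∩ t) = μ (u ∩ t) - ν (u ∩ t) := by
    calc (μ - ν) (u ∩ t) = (μ - ν).restrict t (u ∩ t) := by
          rw [Measure.restrict_apply (hu.inter ht), inter_assoc, inter_self]
      _ = (μ.restrict t - ν.restrict t) (u ∩ t) := by
          rw [Measure.restrict_sub_eq_restrict_sub_restrict ht]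
      _ = μ.restrict t (u ∩ t) - ν.restrict t (u ∩ t) := Measure.sub_apply (hu.inter ht) hr
      _ = μ (u ∩ t) - ν (u ∩ t) := by
          rw [Measure.restrict_apply (hu.inter ht), Measure.restrict_apply (hu.inter ht),
            inter_assoc, inter_self]
  have h2 : μ (u ∩ t) ≤ (μ - ν) (u ∩ t) + ν (u ∩ t) := by
    rw [h1]; exact le_tsub_add
  have h3 : μ (u \ t) ≤ ν (u \ t) := hμν _ (hu.diff ht) (diff_subset_compl u t)
  calc μ u = μ (u ∩ t) + μ (u \ t) := (measure_inter_add_diff u ht).symm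
    _ ≤ ((μ - ν) (u ∩ t) + ν (u ∩ t)) + ν (u \ t) := add_le_add h2 h3
    _ = (μ - ν) (u ∩ t) + (ν (u ∩ t) + ν (u \ t)) := by ring
    _ = (μ - ν) (u ∩ t) + ν u := by rw [measure_inter_add_diff u ht]
    _ ≤ (μ - ν) u + ν u := add_le_add (measure_mono inter_subset_left) le_rfl
    _ = ((μ - ν) + ν) u := (Measure.add_apply _ _ _).symm

end Aux

/-- The loss collision operator on positive measures:
`Q⁻(F,G) = A₀ ∬ |v-v*|^γ ψ(v) dF(v) dG(v*)`, realized as the measure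
`F` with density `v ↦ A₀ ∫ |v-v*|^γ dG(v*)`. -/
noncomputable def Qminus (N : ℕ) (A₀ γ : ℝ)
    (F G : Measure (EuclideanSpace ℝ (Fin N))) : Measure (EuclideanSpace ℝ (Fin N)) :=
  F.withDensity (fun v =>
    ENNReal.ofReal A₀ * ∫⁻ v_star, ENNReal.ofReal (‖v - v_star‖ ^ γ) ∂G)


private noncomputable def Wfun (N : ℕ) (r : ℝ) : EuclideanSpace ℝ (Fin N) → ℝ≥0∞ :=
  fun v => ENNReal.ofReal ((1 + ‖v‖ ^ 2) ^ (r / 2))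

private noncomputable def cfun (N : ℕ) (A₀ γ : ℝ) (μ : Measure (EuclideanSpace ℝ (Fin N))) :
    EuclideanSpace ℝ (Fin N) → ℝ≥0∞ :=
  fun v => ENNReal.ofReal A₀ * ∫⁻ u, ENNReal.ofReal (‖v - u‖ ^ γ) ∂μ

private lemma measurable_k (N : ℕ) {γ : ℝ} (hγ0 : 0 < γ) :
    Measurable (fun p : EuclideanSpace ℝ (Fin N) × EuclideanSpace ℝ (Fin N) =>
      ENNReal.ofReal (‖p.1 - p.2‖ ^ γ)) := by
  have h1 : Continuous (fun p : EuclideanSpace ℝ (Fin N) × EuclideanSpace ℝ (Fin N) =>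
      ‖p.1 - p.2‖) := (continuous_fst.sub continuous_snd).norm
  exact ENNReal.measurable_ofReal.comp
    ((h1.rpow_const fun _ => Or.inr hγ0.le).measurable)

private lemma measurable_kv (N : ℕ) {γ : ℝ} (hγ0 : 0 < γ) (v : EuclideanSpace ℝ (Fin N)) :
    Measurable (fun u : EuclideanSpace ℝ (Fin N) => ENNReal.ofReal (‖v - u‖ ^ γ)) := by
  have h1 : Continuous (fun u : EuclideanSpace ℝ (Fin N) => ‖v - u‖) :=
    (continuous_const.sub continuous_id).norm
  exact ENNReal.measurable_ofReal.comp
    ((h1.rpow_const fun _ => Or.inr hγ0.le).measurable)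

private lemma measurable_Wfun (N : ℕ) {r : ℝ} (hr : 0 ≤ r) : Measurable (Wfun N r) := by
  have h1 : Continuous (fun v : EuclideanSpace ℝ (Fin N) => 1 + ‖v‖ ^ 2) :=
    continuous_const.add (continuous_norm.pow 2)
  exact ENNReal.measurable_ofReal.comp
    ((h1.rpow_const fun _ => Or.inr (div_nonneg hr (by norm_num))).measurable)

private lemma measurable_cfun (N : ℕ) (A₀ : ℝ) {γ : ℝ} (hγ0 : 0 < γ)
    (μ : Measure (EuclideanSpace ℝ (Fin N))) [SFinite μ] :
    Measurable (cfun N A₀ γ μ) :=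
  measurable_const.mul (Measurable.lintegral_prod_right (measurable_k N hγ0))

private lemma key_pointwise {N : ℕ} {γ s : ℝ} (hγ0 : 0 < γ) (hγ2 : γ ≤ 2) (hs : 0 ≤ s)
    (v u : EuclideanSpace ℝ (Fin N)) :
    ENNReal.ofReal (‖v - u‖ ^ γ) * Wfun N s v
      ≤ ENNReal.ofReal (2 ^ ((s + γ) / 2)) * (Wfun N (s + γ) v + Wfun N (s + γ) u) := by
  have two_pow_nonneg : (0:ℝ) ≤ 2 ^ ((s + γ) / 2) := by positivity
  show ENNReal.ofReal (‖v - u‖ ^ γ) * ENNReal.ofReal ((1 + ‖v‖ ^ 2) ^ (s / 2)) ≤ _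
  rw [← ENNReal.ofReal_mul (by positivity)]
  calc ENNReal.ofReal (‖v - u‖ ^ γ * (1 + ‖v‖ ^ 2) ^ (s / 2))
      ≤ ENNReal.ofReal (2 ^ ((s + γ) / 2)
          * ((1 + ‖v‖ ^ 2) ^ ((s + γ) / 2) + (1 + ‖u‖ ^ 2) ^ ((s + γ) / 2))) :=
        ENNReal.ofReal_le_ofReal
          (real_key hγ0 hγ2 hs (norm_nonneg _) (norm_sub_le v u))
    _ = ENNReal.ofReal (2 ^ ((s + γ) / 2)) * (Wfun N (s + γ) v + Wfun N (s + γ) u) := by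
        rw [ENNReal.ofReal_mul two_pow_nonneg,
          ENNReal.ofReal_add (by positivity) (by positivity)]
        rfl

private lemma term_bound {N : ℕ} {A₀ γ s : ℝ} (hγ0 : 0 < γ) (hγ2 : γ ≤ 2) (hs : 0 ≤ s)
    (μ ν : Measure (EuclideanSpace ℝ (Fin N))) [IsFiniteMeasure μ] [IsFiniteMeasure ν] :
    ∫⁻ v, Wfun N s v ∂(ν.withDensity (cfun N A₀ γ μ))
      ≤ ENNReal.ofReal (2 ^ ((s + γ) / 2) * A₀)
        * ((∫⁻ v, Wfun N (s + γ) v ∂ν) * μ Set.univ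
            + ν Set.univ * ∫⁻ v, Wfun N (s + γ) v ∂μ) := by
  have two_pow_nonneg : (0:ℝ) ≤ 2 ^ ((s + γ) / 2) := by positivity
  have hWm := measurable_Wfun N (r := s + γ) (by linarith)
  rw [lintegral_withDensity_eq_lintegral_mul ν (measurable_cfun N A₀ hγ0 μ)
    (measurable_Wfun N hs)]
  have hpt : ∀ v : EuclideanSpace ℝ (Fin N), (cfun N A₀ γ μ * Wfun N s) v
      ≤ ENNReal.ofReal A₀ * (ENNReal.ofReal (2 ^ ((s + γ) / 2))
          * (Wfun N (s + γ) v * μ Set.univ + ∫⁻ u, Wfun N (s + γ) u ∂μ)) := by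
    intro v
    show ENNReal.ofReal A₀ * (∫⁻ u, ENNReal.ofReal (‖v - u‖ ^ γ) ∂μ) * Wfun N s v ≤ _
    rw [mul_assoc]
    refine mul_le_mul_right ?_ _
    calc (∫⁻ u, ENNReal.ofReal (‖v - u‖ ^ γ) ∂μ) * Wfun N s v
        = ∫⁻ u, ENNReal.ofReal (‖v - u‖ ^ γ) * Wfun N s v ∂μ :=
          (lintegral_mul_const _ (measurable_kv N hγ0 v)).symm
      _ ≤ ∫⁻ u, ENNReal.ofReal (2 ^ ((s + γ) / 2)) * (Wfun N (s + γ) v + Wfun N (s + γ) u) ∂μ :=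
          lintegral_mono fun u => key_pointwise hγ0 hγ2 hs v u
      _ = ENNReal.ofReal (2 ^ ((s + γ) / 2))
            * (Wfun N (s + γ) v * μ Set.univ + ∫⁻ u, Wfun N (s + γ) u ∂μ) := by
          rw [lintegral_const_mul _ (f := fun u => Wfun N (s + γ) v + Wfun N (s + γ) u)
              (measurable_const.add hWm),
            lintegral_add_left measurable_const, lintegral_const]
  calc ∫⁻ v, (cfun N A₀ γ μ * Wfun N s) v ∂ν
      ≤ ∫⁻ v, ENNReal.ofReal A₀ * (ENNReal.ofReal (2 ^ ((s + γ) / 2))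
          * (Wfun N (s + γ) v * μ Set.univ + ∫⁻ u, Wfun N (s + γ) u ∂μ)) ∂ν :=
        lintegral_mono hpt
    _ = ENNReal.ofReal A₀ * (ENNReal.ofReal (2 ^ ((s + γ) / 2))
          * ((∫⁻ v, Wfun N (s + γ) v ∂ν) * μ Set.univ
              + (∫⁻ u, Wfun N (s + γ) u ∂μ) * ν Set.univ)) := by
        rw [lintegral_const_mul' _ _ ENNReal.ofReal_ne_top,
          lintegral_const_mul' _ _ ENNReal.ofReal_ne_top,
          lintegral_add_right _ measurable_const,
          lintegral_mul_const _ hWm, lintegral_const]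
    _ = ENNReal.ofReal (2 ^ ((s + γ) / 2) * A₀)
          * ((∫⁻ v, Wfun N (s + γ) v ∂ν) * μ Set.univ
              + ν Set.univ * ∫⁻ v, Wfun N (s + γ) v ∂μ) := by
        rw [ENNReal.ofReal_mul two_pow_nonneg]
        ring

private lemma Qdiff_le {N : ℕ} {A₀ γ : ℝ} (hγ0 : 0 < γ)
    (μ ν : Measure (EuclideanSpace ℝ (Fin N))) [IsFiniteMeasure μ] [IsFiniteMeasure ν] :
    μ.withDensity (cfun N A₀ γ μ) - ν.withDensity (cfun N A₀ γ ν)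
      ≤ (μ - ν).withDensity (cfun N A₀ γ μ) + ν.withDensity (cfun N A₀ γ (μ - ν)) := by
  refine Measure.sub_le_of_le_add ?_
  calc μ.withDensity (cfun N A₀ γ μ) ≤ ((μ - ν) + ν).withDensity (cfun N A₀ γ μ) := by
        refine Measure.le_iff.2 fun u hu => ?_
        rw [withDensity_apply _ hu, withDensity_apply _ hu]
        exact lintegral_mono' (Measure.restrict_mono subset_rfl (meas_le_sub_add μ ν)) le_rfl
    _ = (μ - ν).withDensity (cfun N A₀ γ μ) + ν.withDensity (cfun N A₀ γ μ) :=
        withDensity_add_measure _ _ _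
    _ ≤ (μ - ν).withDensity (cfun N A₀ γ μ)
          + ν.withDensity (cfun N A₀ γ (μ - ν) + cfun N A₀ γ ν) := by
        refine add_le_add le_rfl (withDensity_mono (Filter.Eventually.of_forall fun v => ?_))
        show ENNReal.ofReal A₀ * ∫⁻ u, ENNReal.ofReal (‖v - u‖ ^ γ) ∂μ ≤ _
        have hle : (∫⁻ u, ENNReal.ofReal (‖v - u‖ ^ γ) ∂μ)
            ≤ ∫⁻ u, ENNReal.ofReal (‖v - u‖ ^ γ) ∂(μ - ν)
              + ∫⁻ u, ENNReal.ofReal (‖v - u‖ ^ γ) ∂ν := by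
          rw [← lintegral_add_measure]
          exact lintegral_mono' (meas_le_sub_add μ ν) le_rfl
        calc ENNReal.ofReal A₀ * ∫⁻ u, ENNReal.ofReal (‖v - u‖ ^ γ) ∂μ
            ≤ ENNReal.ofReal A₀ * (∫⁻ u, ENNReal.ofReal (‖v - u‖ ^ γ) ∂(μ - ν)
                + ∫⁻ u, ENNReal.ofReal (‖v - u‖ ^ γ) ∂ν) := mul_le_mul_right hle _
          _ = (cfun N A₀ γ (μ - ν) + cfun N A₀ γ ν) v := by
              show _ = cfun N A₀ γ (μ - ν) v + cfun N A₀ γ ν v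
              rw [mul_add]
              rfl
    _ = (μ - ν).withDensity (cfun N A₀ γ μ)
          + (ν.withDensity (cfun N A₀ γ (μ - ν)) + ν.withDensity (cfun N A₀ γ ν)) := by
        rw [withDensity_add_right _ (measurable_cfun N A₀ hγ0 ν)]
    _ = ((μ - ν).withDensity (cfun N A₀ γ μ) + ν.withDensity (cfun N A₀ γ (μ - ν)))
          + ν.withDensity (cfun N A₀ γ ν) := (add_assoc _ _ _).symm

private lemma Qdiff_lintegral_le {N : ℕ} {A₀ γ s : ℝ} (hγ0 : 0 < γ) (hγ2 : γ ≤ 2) (hs : 0 ≤ s)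
    (μ ν : Measure (EuclideanSpace ℝ (Fin N))) [IsFiniteMeasure μ] [IsFiniteMeasure ν] :
    ∫⁻ v, Wfun N s v ∂(μ.withDensity (cfun N A₀ γ μ) - ν.withDensity (cfun N A₀ γ ν))
      ≤ ENNReal.ofReal (2 ^ ((s + γ) / 2) * A₀)
          * ((∫⁻ v, Wfun N (s + γ) v ∂(μ - ν)) * μ Set.univ
              + (μ - ν) Set.univ * ∫⁻ v, Wfun N (s + γ) v ∂μ)
        + ENNReal.ofReal (2 ^ ((s + γ) / 2) * A₀)
          * ((∫⁻ v, Wfun N (s + γ) v ∂ν) * (μ - ν) Set.univ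
              + ν Set.univ * ∫⁻ v, Wfun N (s + γ) v ∂(μ - ν)) := by
  calc ∫⁻ v, Wfun N s v ∂(μ.withDensity (cfun N A₀ γ μ) - ν.withDensity (cfun N A₀ γ ν))
      ≤ ∫⁻ v, Wfun N s v
          ∂((μ - ν).withDensity (cfun N A₀ γ μ) + ν.withDensity (cfun N A₀ γ (μ - ν))) :=
        lintegral_mono' (Qdiff_le hγ0 μ ν) le_rfl
    _ = ∫⁻ v, Wfun N s v ∂((μ - ν).withDensity (cfun N A₀ γ μ))
          + ∫⁻ v, Wfun N s v ∂(ν.withDensity (cfun N A₀ γ (μ - ν))) :=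
        lintegral_add_measure _ _ _
    _ ≤ _ := add_le_add (term_bound hγ0 hγ2 hs μ (μ - ν)) (term_bound hγ0 hγ2 hs (μ - ν) ν)

set_option maxHeartbeats 1000000 in
/-- `‖Q⁻(F,F) - Q⁻(G,G)‖_s ≤ 2^{(s+γ)/2} A₀ (‖F+G‖_{s+γ} ‖F-G‖₀
+ ‖F+G‖₀ ‖F-G‖_{s+γ})`, where the total variation `|μ - ν|` of the difference of two finite
measures is realized as `(μ - ν) + (ν - μ)` with truncated measure subtraction, and
`‖μ‖_s = ∫ ⟨v⟩^s d|μ|` with `⟨v⟩ = (1+|v|²)^{1/2}`. -/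
theorem stmt14 (N : ℕ) (hN : 1 ≤ N) (A₀ γ s : ℝ) (hA₀ : 0 < A₀)
    (hγ0 : 0 < γ) (hγ2 : γ ≤ 2) (hs : 0 ≤ s)
    (F G : Measure (EuclideanSpace ℝ (Fin N))) [IsFiniteMeasure F] [IsFiniteMeasure G]
    (hF : ∫⁻ v, ENNReal.ofReal ((1 + ‖v‖ ^ 2) ^ ((s + γ) / 2)) ∂F < ⊤)
    (hG : ∫⁻ v, ENNReal.ofReal ((1 + ‖v‖ ^ 2) ^ ((s + γ) / 2)) ∂G < ⊤) :
    ∫⁻ v, ENNReal.ofReal ((1 + ‖v‖ ^ 2) ^ (s / 2))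
        ∂((Qminus N A₀ γ F F - Qminus N A₀ γ G G) + (Qminus N A₀ γ G G - Qminus N A₀ γ F F))
      ≤ ENNReal.ofReal (2 ^ ((s + γ) / 2) * A₀)
        * ((∫⁻ v, ENNReal.ofReal ((1 + ‖v‖ ^ 2) ^ ((s + γ) / 2)) ∂(F + G))
              * ∫⁻ v, (1 : ℝ≥0∞) ∂((F - G) + (G - F))
            + (∫⁻ v, (1 : ℝ≥0∞) ∂(F + G))
              * ∫⁻ v, ENNReal.ofReal ((1 + ‖v‖ ^ 2) ^ ((s + γ) / 2)) ∂((F - G) + (G - F))) := by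
  have hQF : Qminus N A₀ γ F F = F.withDensity (cfun N A₀ γ F) := rfl
  have hQG : Qminus N A₀ γ G G = G.withDensity (cfun N A₀ γ G) := rfl
  have hWeq : (fun v : EuclideanSpace ℝ (Fin N) =>
      ENNReal.ofReal ((1 + ‖v‖ ^ 2) ^ ((s + γ) / 2))) = Wfun N (s + γ) := rfl
  have hweq : (fun v : EuclideanSpace ℝ (Fin N) =>
      ENNReal.ofReal ((1 + ‖v‖ ^ 2) ^ (s / 2))) = Wfun N s := rfl
  rw [hQF, hQG, hWeq, hweq, lintegral_add_measure]
  have h1 := Qdiff_lintegral_le (A₀ := A₀) hγ0 hγ2 hs F G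
  have h2 := Qdiff_lintegral_le (A₀ := A₀) hγ0 hγ2 hs G F
  refine le_trans (add_le_add h1 h2) ?_
  simp only [lintegral_add_measure, lintegral_one, Measure.add_apply]
  refine le_of_eq ?_
  ring
end
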